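/- arXiv:2312.07287 — 8 statements merged into one kernel-verified Lean document; each statement's English description precedes it below -/
import Mathlib

section
/- Let V₁, V₂ and W be finite-dimensional real vector spaces, let φ: V₁ × V₂ → W be a bilinear map, and let W be endowed with a nondegenerate symmetric bilinear form ⟨,⟩. For X ∈ RE(φ) set τ_φ(X) = dim(φ_X(V₂) ∩ φ_X(V₂)^⊥) and τ(φ) = min_{X ∈ RE(φ)} τ_φ(X). Then RE^#(φ) = {X ∈ RE(φ) : τ_φ(X) = τ(φ)} is an open and dense subset of V₁. -/
/-!
A linear map `L` has rank at least `k` iff some `k × k` minor `det (Q ∘ L ∘ P)` is nonzero. When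
`L = F X` depends analytically on `X`, every minor is an analytic function of `X`, so
`{X | k ≤ rank (F X)}` is open, and it is dense as soon as it is nonempty because a nonzero analytic
function on a connected space vanishes on no open set.

With `ψ_X v u = ⟨φ_X u, φ_X v⟩`, the kernel of `ψ_X` is `φ_X⁻¹(φ_X(V₂)^⊥)`, so
`τ_φ(X) = rank φ_X - rank ψ_X`. Hence `RE^#(φ) = {κ ≤ rank φ_X} ∩ {κ - τ(φ) ≤ rank ψ_X}`, an
intersection of two open dense sets.
-/

open Module LinearMap

theorem Nat.exists_eq_iSup_of_bddAbove {ι : Type*} [Nonempty ι] {f : ι → ℕ}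
    (hf : BddAbove (Set.range f)) : ∃ i, f i = ⨆ i, f i :=
  Nat.sSup_mem (Set.range_nonempty f) hf

section LinearAlgebra

variable {K V W : Type*} [Field K] [AddCommGroup V] [Module K V] [AddCommGroup W] [Module K W]

theorem LinearMap.le_finrank_range_iff_exists_det_ne_zero [FiniteDimensional K W]
    (L : V →ₗ[K] W) (k : ℕ) :
    k ≤ finrank K (range L) ↔
      ∃ (P : (Fin k → K) →ₗ[K] V) (Q : W →ₗ[K] Fin k → K), LinearMap.det (Q ∘ₗ L ∘ₗ P) ≠ 0 := by
  constructor
  · intro hk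
    obtain ⟨R, hR⟩ := (range L).subtype.exists_leftInverse_of_injective (range L).ker_subtype
    let Q : W →ₗ[K] Fin k → K :=
      funLeft K K (Fin.castLE hk) ∘ₗ (finBasis K (range L)).equivFun.toLinearMap ∘ₗ R
    have hQL : Function.Surjective (Q ∘ₗ L) := by
      have hRL (x : V) : R (L x) = L.rangeRestrict x := LinearMap.congr_fun hR (L.rangeRestrict x)
      have hcoe : ⇑(Q ∘ₗ L) = funLeft K K (Fin.castLE hk) ∘ (finBasis K (range L)).equivFun ∘
          L.rangeRestrict := funext fun x => by simp [Q, hRL]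
      rw [hcoe]
      exact (funLeft_surjective_of_injective K K _ (Fin.castLE_injective hk)).comp
        ((LinearEquiv.surjective _).comp L.surjective_rangeRestrict)
    obtain ⟨P, hP⟩ := (Q ∘ₗ L).exists_rightInverse_of_surjective (range_eq_top.mpr hQL)
    refine ⟨P, Q, ?_⟩
    rw [← comp_assoc, hP, det_id]
    exact one_ne_zero
  · rintro ⟨P, Q, hdet⟩
    have hsurj : Function.Surjective (Q ∘ₗ (range L).subtype) := by
      intro y
      obtain ⟨x, rfl⟩ := (equivOfDetNeZero _ hdet).surjective y
      exact ⟨⟨L (P x), mem_range_self L _⟩, rfl⟩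
    simpa using LinearMap.finrank_le_finrank_of_surjective hsurj

theorem LinearMap.finrank_range_comp_add_finrank_inf_ker {W' : Type*} [AddCommGroup W']
    [Module K W'] [FiniteDimensional K V] (L : V →ₗ[K] W) (M : W →ₗ[K] W') :
    finrank K (range (M ∘ₗ L)) + finrank K ↥(range L ⊓ ker M) = finrank K (range L) := by
  have h := (M.domRestrict (range L)).finrank_range_add_finrank_ker
  rwa [range_domRestrict, ← range_comp, ker_domRestrict, ← Submodule.finrank_map_subtype_eq,
    Submodule.map_comap_subtype] at h

theorem LinearMap.BilinForm.finrank_range_flip_comp_add_finrank_inf_orthogonal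
    [FiniteDimensional K V] (B : LinearMap.BilinForm K W) (L : V →ₗ[K] W) :
    finrank K (range (B.flip.comp L L)) + finrank K ↥(range L ⊓ B.orthogonal (range L)) =
      finrank K (range L) := by
  have hker : ker (L.dualMap ∘ₗ B.flip) = B.orthogonal (range L) := by
    ext w
    simp [LinearMap.BilinForm.mem_orthogonal_iff, LinearMap.ext_iff]
  rw [← hker]
  exact finrank_range_comp_add_finrank_inf_ker L (L.dualMap ∘ₗ B.flip)

end LinearAlgebra

section Analytic

variable {𝕜 E : Type*} [NontriviallyNormedField 𝕜] [NormedAddCommGroup E] [NormedSpace 𝕜 E]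

theorem AnalyticOnNhd.matrix_det {n : Type*} [Fintype n] [DecidableEq n] {s : Set E}
    {M : E → Matrix n n 𝕜} (h : ∀ i j, AnalyticOnNhd 𝕜 (fun x => M x i j) s) :
    AnalyticOnNhd 𝕜 (fun x => (M x).det) s := by
  simp_rw [Matrix.det_apply, Units.smul_def, zsmul_eq_mul]
  exact Finset.analyticOnNhd_fun_sum _ fun σ _ =>
    analyticOnNhd_const.mul (Finset.analyticOnNhd_fun_prod _ fun i _ => h (σ i) i)

theorem AnalyticOnNhd.dense_setOf_ne_zero [PreconnectedSpace E] {g : E → 𝕜}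
    (hg : AnalyticOnNhd 𝕜 g Set.univ) {x₀ : E} (h₀ : g x₀ ≠ 0) : Dense {x | g x ≠ 0} := by
  refine interior_eq_empty_iff_dense_compl.mp (Set.eq_empty_of_forall_notMem fun x hx => h₀ ?_)
  have hx : g =ᶠ[nhds x] 0 := mem_interior_iff_mem_nhds.mp hx
  exact hg.eqOn_zero_of_preconnected_of_eventuallyEq_zero isPreconnected_univ (Set.mem_univ x) hx
    (Set.mem_univ x₀)

theorem LinearMap.analyticOnNhd [FiniteDimensional 𝕜 E] [CompleteSpace 𝕜] (f : E →ₗ[𝕜] 𝕜) :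
    AnalyticOnNhd 𝕜 f Set.univ := by
  simpa using f.toContinuousLinearMap.analyticOnNhd Set.univ

theorem LinearMap.analyticOnNhd_apply_self [FiniteDimensional 𝕜 E] [CompleteSpace 𝕜]
    (β : E →ₗ[𝕜] E →ₗ[𝕜] 𝕜) : AnalyticOnNhd 𝕜 (fun x => β x x) Set.univ := fun x _ =>
  (β.toContinuousBilinearMap.analyticAt_bilinear (x, x)).comp₂ analyticAt_id analyticAt_id

section RankSets

variable {V W : Type*} [AddCommGroup V] [Module 𝕜 V] [AddCommGroup W] [Module 𝕜 W]
  {F : E → V →ₗ[𝕜] W}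

theorem analyticOnNhd_det_comp
    (hF : ∀ v (ℓ : Dual 𝕜 W), AnalyticOnNhd 𝕜 (fun X => ℓ (F X v)) Set.univ) {k : ℕ}
    (P : (Fin k → 𝕜) →ₗ[𝕜] V) (Q : W →ₗ[𝕜] Fin k → 𝕜) :
    AnalyticOnNhd 𝕜 (fun X => LinearMap.det (Q ∘ₗ F X ∘ₗ P)) Set.univ := by
  simp_rw [← LinearMap.det_toMatrix']
  exact AnalyticOnNhd.matrix_det fun i j => hF (P (Pi.single j 1)) (proj i ∘ₗ Q)

theorem isOpen_setOf_le_finrank_range [FiniteDimensional 𝕜 W]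
    (hF : ∀ v (ℓ : Dual 𝕜 W), AnalyticOnNhd 𝕜 (fun X => ℓ (F X v)) Set.univ) (k : ℕ) :
    IsOpen {X | k ≤ finrank 𝕜 (range (F X))} := by
  have hU : {X | k ≤ finrank 𝕜 (range (F X))} =
      ⋃ (P : (Fin k → 𝕜) →ₗ[𝕜] V) (Q : W →ₗ[𝕜] Fin k → 𝕜),
        {X | LinearMap.det (Q ∘ₗ F X ∘ₗ P) ≠ 0} := by
    ext X
    simp [le_finrank_range_iff_exists_det_ne_zero]
  rw [hU]
  exact isOpen_iUnion fun P => isOpen_iUnion fun Q =>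
    isOpen_ne.preimage (continuousOn_univ.mp (analyticOnNhd_det_comp hF P Q).continuousOn)

theorem dense_setOf_le_finrank_range [FiniteDimensional 𝕜 W] [PreconnectedSpace E]
    (hF : ∀ v (ℓ : Dual 𝕜 W), AnalyticOnNhd 𝕜 (fun X => ℓ (F X v)) Set.univ) {k : ℕ} {X₀ : E}
    (hX₀ : k ≤ finrank 𝕜 (range (F X₀))) :
    Dense {X | k ≤ finrank 𝕜 (range (F X))} := by
  obtain ⟨P, Q, hPQ⟩ := (le_finrank_range_iff_exists_det_ne_zero (F X₀) k).mp hX₀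
  exact ((analyticOnNhd_det_comp hF P Q).dense_setOf_ne_zero hPQ).mono fun X hX =>
    (le_finrank_range_iff_exists_det_ne_zero (F X) k).mpr ⟨P, Q, hX⟩

end RankSets

end Analytic

theorem stmt_1_general
    {V₁ V₂ W : Type*}
    [NormedAddCommGroup V₁] [NormedSpace ℝ V₁] [FiniteDimensional ℝ V₁]
    [AddCommGroup V₂] [Module ℝ V₂] [FiniteDimensional ℝ V₂]
    [AddCommGroup W] [Module ℝ W] [FiniteDimensional ℝ W]
    (B : LinearMap.BilinForm ℝ W)
    (φ : V₁ →ₗ[ℝ] V₂ →ₗ[ℝ] W)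
    (κ : ℕ) (hκ : κ = ⨆ X : V₁, finrank ℝ (LinearMap.range (φ X)))
    (RE : Set V₁) (hRE : RE = {X : V₁ | finrank ℝ (LinearMap.range (φ X)) = κ})
    (τ : V₁ → ℕ)
    (hτ : ∀ X, τ X =
      finrank ℝ ↥(LinearMap.range (φ X) ⊓ B.orthogonal (LinearMap.range (φ X))))
    (τ₀ : ℕ) (hτ₀ : τ₀ = sInf (τ '' RE))
    (REsharp : Set V₁) (hREsharp : REsharp = {X ∈ RE | τ X = τ₀}) :
    IsOpen REsharp ∧ Dense REsharp := by
  let ψ (X : V₁) : LinearMap.BilinForm ℝ V₂ := B.flip.comp (φ X) (φ X)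
  have hψ (X : V₁) : finrank ℝ (range (ψ X)) + τ X = finrank ℝ (range (φ X)) :=
    hτ X ▸ B.finrank_range_flip_comp_add_finrank_inf_orthogonal (φ X)
  have hφ_an (v : V₂) (ℓ : Dual ℝ W) : AnalyticOnNhd ℝ (fun X => ℓ (φ X v)) Set.univ :=
    (ℓ ∘ₗ φ.flip v).analyticOnNhd
  have hψ_an (v : V₂) (ℓ : Dual ℝ (Dual ℝ V₂)) :
      AnalyticOnNhd ℝ (fun X => ℓ (ψ X v)) Set.univ := by
    obtain ⟨u, rfl⟩ := (evalEquiv ℝ V₂).surjective ℓ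
    exact (B.compl₁₂ (φ.flip u) (φ.flip v)).analyticOnNhd_apply_self
  have hbdd : BddAbove (Set.range fun X => finrank ℝ (range (φ X))) :=
    ⟨finrank ℝ W, by rintro _ ⟨X, rfl⟩; exact Submodule.finrank_le _⟩
  have hφ_le (X : V₁) : finrank ℝ (range (φ X)) ≤ κ := hκ ▸ le_ciSup hbdd X
  have hRE_iff (X : V₁) : X ∈ RE ↔ finrank ℝ (range (φ X)) = κ := by rw [hRE]; rfl
  obtain ⟨X₀, hX₀⟩ := hκ ▸ Nat.exists_eq_iSup_of_bddAbove hbdd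
  obtain ⟨X₁, hX₁, hτX₁⟩ : τ₀ ∈ τ '' RE :=
    hτ₀ ▸ Nat.sInf_mem ⟨_, X₀, (hRE_iff X₀).mpr hX₀, rfl⟩
  have hτ₀_le (X : V₁) (hX : X ∈ RE) : τ₀ ≤ τ X := hτ₀ ▸ Nat.sInf_le ⟨X, hX, rfl⟩
  have hsplit : REsharp =
      {X | κ ≤ finrank ℝ (range (φ X))} ∩ {X | κ - τ₀ ≤ finrank ℝ (range (ψ X))} := by
    ext X
    have := hψ X
    have := hφ_le X
    have := hτ₀_le X
    rw [hRE_iff] at this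
    simp only [hREsharp, hRE_iff, Set.mem_ofPred_eq, Set.mem_inter_iff]
    omega
  have hX₁ψ : κ - τ₀ ≤ finrank ℝ (range (ψ X₁)) := by
    have := hψ X₁
    have := (hRE_iff X₁).mp hX₁
    omega
  rw [hsplit]
  have hopen := isOpen_setOf_le_finrank_range hφ_an κ
  exact ⟨hopen.inter (isOpen_setOf_le_finrank_range hψ_an _),
    (dense_setOf_le_finrank_range hφ_an ((hRE_iff X₁).mp hX₁).ge).inter_of_isOpen_left
      (dense_setOf_le_finrank_range hψ_an hX₁ψ) hopen⟩

/-- Proposition (facts), part (ii): with `W` endowed with a nondegenerate symmetric bilinear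
form, the set `RE^#(φ)` of regular elements `X` for which
`τ_φ(X) = dim (φ_X(V₂) ∩ φ_X(V₂)^⊥)` is minimal is open and dense in `V₁`. -/
theorem stmt_1
    {V₁ V₂ W : Type*}
    [NormedAddCommGroup V₁] [NormedSpace ℝ V₁] [FiniteDimensional ℝ V₁]
    [AddCommGroup V₂] [Module ℝ V₂] [FiniteDimensional ℝ V₂]
    [AddCommGroup W] [Module ℝ W] [FiniteDimensional ℝ W]
    (B : LinearMap.BilinForm ℝ W)
    (hBsymm : ∀ x y, B x y = B y x)
    (hBnondeg : B.Nondegenerate)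
    (φ : V₁ →ₗ[ℝ] V₂ →ₗ[ℝ] W)
    (κ : ℕ) (hκ : κ = ⨆ X : V₁, finrank ℝ (LinearMap.range (φ X)))
    (RE : Set V₁) (hRE : RE = {X : V₁ | finrank ℝ (LinearMap.range (φ X)) = κ})
    (τ : V₁ → ℕ)
    (hτ : ∀ X, τ X =
      finrank ℝ ↥(LinearMap.range (φ X) ⊓ B.orthogonal (LinearMap.range (φ X))))
    (τ₀ : ℕ) (hτ₀ : τ₀ = sInf (τ '' RE))
    (REsharp : Set V₁) (hREsharp : REsharp = {X ∈ RE | τ X = τ₀}) :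
    IsOpen REsharp ∧ Dense REsharp :=
  stmt_1_general B φ κ hκ RE hRE τ hτ τ₀ hτ₀ REsharp hREsharp
end

section
/- Let V₁, V₂ and W be finite-dimensional real vector spaces and let φ: V₁ × V₂ → W be a bilinear map. If X ∈ RE(φ) and N(X) = ker φ_X, then span{φ(Z,Y) : Z ∈ V₁, Y ∈ N(X)} ⊆ φ_X(V₂). -/
/-!
Pick `u_i` with `φ_X u_i` a basis of `φ_X(V₂)`. If `φ(Z,Y) ∉ φ_X(V₂)`, the `κ + 1` vectors
`φ_X u_i, φ(Z,Y)` are linearly independent. Linear independence is an open condition, so for some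
small `t ≠ 0` so are `φ_{X+tZ} u_i = φ_X u_i + t φ(Z,u_i)` and `φ_{X+tZ}(t⁻¹Y) = φ(Z,Y)`
(as `φ_X Y = 0`). Then `φ_{X+tZ}` has rank `> κ`, contradicting the regularity of `X`.
-/

open Module LinearMap Filter Topology

theorem LinearIndependent.exists_ne_zero_linearIndependent_add_smul
    {𝕜 E ι : Type*} [NontriviallyNormedField 𝕜] [CompleteSpace 𝕜]
    [AddCommGroup E] [Module 𝕜 E] [FiniteDimensional 𝕜 E] [Finite ι]
    {v : ι → E} (hv : LinearIndependent 𝕜 v) (w : ι → E) :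
    ∃ t : 𝕜, t ≠ 0 ∧ LinearIndependent 𝕜 (v + t • w) := by
  -- `E` carries no topology; transport to coordinates, where `LinearIndependent.eventually` applies.
  let e := (finBasis 𝕜 E).equivFun
  have hcomp : ∀ t : 𝕜, ⇑e ∘ (v + t • w) = ⇑e ∘ v + t • (⇑e ∘ w) := fun t => by
    ext1 i
    simp
  have hlim : Tendsto (fun t : 𝕜 => ⇑e ∘ (v + t • w)) (𝓝[≠] 0) (𝓝 (⇑e ∘ v)) := by
    simp only [hcomp]
    refine (Continuous.tendsto' ?_ 0 _ (by simp)).mono_left nhdsWithin_le_nhds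
    fun_prop
  obtain ⟨t, hindep, ht⟩ :=
    ((hlim.eventually ((hv.map' e.toLinearMap e.ker).eventually)).and
      self_mem_nhdsWithin).exists
  exact ⟨t, ht, hindep.of_comp e.toLinearMap⟩

theorem LinearIndependent.fintype_card_le_finrank_range {𝕜 V W ι : Type*} [Field 𝕜]
    [AddCommGroup V] [Module 𝕜 V] [AddCommGroup W] [Module 𝕜 W] [FiniteDimensional 𝕜 W]
    [Fintype ι] {f : V →ₗ[𝕜] W} {g : ι → V} (hg : LinearIndependent 𝕜 (f ∘ g)) :
    Fintype.card ι ≤ finrank 𝕜 (range f) := by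
  rw [← finrank_span_eq_card hg]
  exact Submodule.finrank_mono (Submodule.span_le.2 (Set.range_comp_subset_range g f))

namespace LinearMap

variable {𝕜 V₁ V₂ W : Type*} [AddCommGroup V₁] [AddCommGroup V₂] [AddCommGroup W]

section Field

variable [Field 𝕜] [Module 𝕜 V₁] [Module 𝕜 V₂] [Module 𝕜 W]

def IsRegularElement (φ : V₁ →ₗ[𝕜] V₂ →ₗ[𝕜] W) (X : V₁) : Prop :=
  ∀ X' : V₁, finrank 𝕜 (range (φ X')) ≤ finrank 𝕜 (range (φ X))

theorem isRegularElement_of_finrank_range_eq_iSup [FiniteDimensional 𝕜 W]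
    {φ : V₁ →ₗ[𝕜] V₂ →ₗ[𝕜] W} {X : V₁}
    (hX : finrank 𝕜 (range (φ X)) = ⨆ X' : V₁, finrank 𝕜 (range (φ X'))) :
    φ.IsRegularElement X := by
  intro X'
  rw [hX]
  exact le_ciSup (f := fun X' => finrank 𝕜 (range (φ X')))
    ⟨finrank 𝕜 W, by rintro _ ⟨X', rfl⟩; exact Submodule.finrank_le _⟩ X'

end Field

variable [NontriviallyNormedField 𝕜] [CompleteSpace 𝕜] [Module 𝕜 V₁] [Module 𝕜 V₂] [Module 𝕜 W]
  [FiniteDimensional 𝕜 W]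

theorem IsRegularElement.apply_mem_range_of_mem_ker {φ : V₁ →ₗ[𝕜] V₂ →ₗ[𝕜] W} {X : V₁}
    (hX : φ.IsRegularElement X) (Z : V₁) {Y : V₂} (hY : Y ∈ ker (φ X)) :
    φ Z Y ∈ range (φ X) := by
  by_contra hZY
  let e := finBasis 𝕜 (range (φ X))
  choose u hu using fun i => (e i).2
  have hindep : LinearIndependent 𝕜
      (fun o => Option.casesOn' o (φ Z Y) fun i => (e i : W)) := by
    refine linearIndependent_option'.2
      ⟨e.linearIndependent.map' _ (Submodule.ker_subtype _), fun h => hZY ?_⟩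
    exact Submodule.span_le.2 (Set.range_subset_iff.2 fun i => (e i).2) h
  obtain ⟨t, ht, hindep'⟩ := hindep.exists_ne_zero_linearIndependent_add_smul
    fun o => Option.casesOn' o 0 fun i => φ Z (u i)
  have hperturb : (fun o => Option.casesOn' o (φ Z Y) fun i => (e i : W)) +
      t • (fun o => Option.casesOn' o 0 fun i => φ Z (u i)) =
      φ (X + t • Z) ∘ fun o => Option.casesOn' o (t⁻¹ • Y) u := by
    ext (_ | i)
    · simp [mem_ker.1 hY, smul_smul, ht]
    · simp [hu]
  have hcard := (hperturb ▸ hindep').fintype_card_le_finrank_range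
  rw [Fintype.card_option, Fintype.card_fin] at hcard
  exact (hX (X + t • Z)).not_gt hcard

end LinearMap

theorem stmt_2_general
    {V₁ V₂ W : Type*}
    [AddCommGroup V₁] [Module ℝ V₁]
    [AddCommGroup V₂] [Module ℝ V₂]
    [AddCommGroup W] [Module ℝ W] [FiniteDimensional ℝ W]
    (φ : V₁ →ₗ[ℝ] V₂ →ₗ[ℝ] W)
    (κ : ℕ) (hκ : κ = ⨆ X : V₁, finrank ℝ (LinearMap.range (φ X)))
    (X : V₁) (hX : finrank ℝ (LinearMap.range (φ X)) = κ) :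
    Submodule.span ℝ {w | ∃ Z : V₁, ∃ Y ∈ LinearMap.ker (φ X), φ Z Y = w} ≤
      LinearMap.range (φ X) := by
  have hreg : φ.IsRegularElement X := isRegularElement_of_finrank_range_eq_iSup (hX.trans hκ)
  rw [Submodule.span_le]
  rintro _ ⟨Z, Y, hY, rfl⟩
  exact hreg.apply_mem_range_of_mem_ker Z hY

/-- Proposition (firstst): if `X` is a regular element of the bilinear map `φ` and
`N(X) = ker φ_X`, then `S(φ|_{V₁ × N(X)}) ⊆ φ_X(V₂)`. -/
theorem stmt_2
    {V₁ V₂ W : Type*}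
    [AddCommGroup V₁] [Module ℝ V₁] [FiniteDimensional ℝ V₁]
    [AddCommGroup V₂] [Module ℝ V₂] [FiniteDimensional ℝ V₂]
    [AddCommGroup W] [Module ℝ W] [FiniteDimensional ℝ W]
    (φ : V₁ →ₗ[ℝ] V₂ →ₗ[ℝ] W)
    (κ : ℕ) (hκ : κ = ⨆ X : V₁, finrank ℝ (LinearMap.range (φ X)))
    (X : V₁) (hX : finrank ℝ (LinearMap.range (φ X)) = κ) :
    Submodule.span ℝ {w | ∃ Z : V₁, ∃ Y ∈ LinearMap.ker (φ X), φ Z Y = w} ≤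
      LinearMap.range (φ X) :=
  stmt_2_general φ κ hκ X hX
end

section
/- Let V₁ be a finite-dimensional real vector space and let V₂ be a finite-dimensional real vector space endowed with a complex structure J. Let φ: V₁ × V₂ → W^{p,p} be a bilinear map satisfying 𝒯φ(X,Y) = φ(X,JY) for all X ∈ V₁ and Y ∈ V₂, and let 𝒰 = S(φ) ∩ S(φ)^⊥. Then 𝒯 restricts to complex structures of S(φ) and of 𝒰; in particular, the subspaces S(φ) and 𝒰 of W^{p,p} have even dimension. -/
open Module LinearMap RealInnerProductSpace

/-- If a finite-dimensional real vector space admits an endomorphism squaring to `-1`,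
its dimension is even. -/
lemma even_finrank_of_complex_structure {M : Type*} [AddCommGroup M] [Module ℝ M]
    [FiniteDimensional ℝ M] (f : M →ₗ[ℝ] M) (hf : ∀ x, f (f x) = -x) :
    Even (finrank ℝ M) := by
  have hcomp : f ∘ₗ f = (-1 : ℝ) • LinearMap.id := by
    ext x; simp [hf x]
  have hdet : f.det * f.det = (-1 : ℝ) ^ finrank ℝ M := by
    have := LinearMap.det_comp f f
    rw [hcomp] at this
    rw [← this, LinearMap.det_smul, LinearMap.det_id, mul_one]
  by_contra h
  have hodd : Odd (finrank ℝ M) := Nat.not_even_iff_odd.mp h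
  rw [hodd.neg_one_pow] at hdet
  nlinarith [sq_nonneg f.det]

/-- Proposition (even), parts (i) and (ii): `𝒯` restricts to complex structures on `S(φ)`
and on `𝒰 = S(φ) ∩ S(φ)^⊥`; in particular both subspaces have even dimension. -/
theorem stmt_5
    {V₁ V₂ U : Type*}
    [AddCommGroup V₁] [Module ℝ V₁] [FiniteDimensional ℝ V₁]
    [AddCommGroup V₂] [Module ℝ V₂] [FiniteDimensional ℝ V₂]
    [NormedAddCommGroup U] [InnerProductSpace ℝ U] [FiniteDimensional ℝ U]
    (p : ℕ) (hU : finrank ℝ U = p)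
    (J : V₂ →ₗ[ℝ] V₂) (hJ : ∀ Y, J (J Y) = -Y)
    (B : LinearMap.BilinForm ℝ (U × U))
    (hB : ∀ v w : U × U, B v w = ⟪v.1, w.1⟫ - ⟪v.2, w.2⟫)
    (T : (U × U) →ₗ[ℝ] (U × U)) (hT : ∀ v : U × U, T v = (v.2, -v.1))
    (φ : V₁ →ₗ[ℝ] V₂ →ₗ[ℝ] (U × U))
    (hφ : ∀ X Y, T (φ X Y) = φ X (J Y))
    (Sφ : Submodule ℝ (U × U))
    (hSφ : Sφ = Submodule.span ℝ {w | ∃ X Y, φ X Y = w})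
    (𝒰 : Submodule ℝ (U × U)) (h𝒰 : 𝒰 = Sφ ⊓ B.orthogonal Sφ) :
    Submodule.map T Sφ = Sφ ∧ Submodule.map T 𝒰 = 𝒰 ∧
      Even (finrank ℝ Sφ) ∧ Even (finrank ℝ 𝒰) := by
  have hTT : ∀ v : U × U, T (T v) = -v := by
    intro v; rw [hT, hT]; simp [Prod.ext_iff]
  -- T maps Sφ into Sφ
  have hmem : ∀ v ∈ Sφ, T v ∈ Sφ := by
    intro v hv
    rw [hSφ] at hv ⊢
    induction hv using Submodule.span_induction with
    | mem w hw =>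
      obtain ⟨X, Y, rfl⟩ := hw
      exact Submodule.subset_span ⟨X, J Y, (hφ X Y).symm⟩
    | zero => simp
    | add x y hx hy ihx ihy => rw [map_add]; exact Submodule.add_mem _ ihx ihy
    | smul a x hx ihx => rw [map_smul]; exact Submodule.smul_mem _ a ihx
  have hmapS : Submodule.map T Sφ = Sφ := by
    apply le_antisymm
    · rintro _ ⟨v, hv, rfl⟩; exact hmem v hv
    · intro v hv
      exact ⟨-T v, Submodule.neg_mem _ (hmem v hv), by rw [map_neg, hTT, neg_neg]⟩
  -- B (T v) (T w) = - B v w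
  have hBT : ∀ v w : U × U, B (T v) (T w) = -(B v w) := by
    intro v w
    rw [hB, hB, hT, hT]
    simp [real_inner_smul_left, real_inner_smul_right]
  -- T maps the orthogonal complement into itself
  have hmemO : ∀ v ∈ B.orthogonal Sφ, T v ∈ B.orthogonal Sφ := by
    intro v hv n hn
    rw [← hmapS] at hn
    obtain ⟨n', hn', rfl⟩ := hn
    have := hv n' hn'
    rw [hBT, this, neg_zero]
  have hmemU : ∀ v ∈ 𝒰, T v ∈ 𝒰 := by
    intro v hv
    rw [h𝒰] at hv ⊢
    exact ⟨hmem v hv.1, hmemO v hv.2⟩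
  have hmapU : Submodule.map T 𝒰 = 𝒰 := by
    apply le_antisymm
    · rintro _ ⟨v, hv, rfl⟩; exact hmemU v hv
    · intro v hv
      exact ⟨-T v, Submodule.neg_mem _ (hmemU v hv), by rw [map_neg, hTT, neg_neg]⟩
  refine ⟨hmapS, hmapU, ?_, ?_⟩
  · exact even_finrank_of_complex_structure (T.restrict hmem)
      (fun x => Subtype.ext (by simp [LinearMap.restrict_apply, hTT]))
  · exact even_finrank_of_complex_structure (T.restrict hmemU)
      (fun x => Subtype.ext (by simp [LinearMap.restrict_apply, hTT]))
end

section
/- Let V₁ be a finite-dimensional real vector space and let V₂ be a finite-dimensional real vector space endowed with a complex structure J. Let φ: V₁ × V₂ → W^{p,p} be a bilinear map satisfying 𝒯φ(X,Y) = φ(X,JY) for all X ∈ V₁ and Y ∈ V₂, and let 𝒰 = S(φ) ∩ S(φ)^⊥ and Ω = π₁(𝒰). Then dim Ω = dim 𝒰, and if φ_Ω denotes the composition of φ with the map W^{p,p} → Ω ⊕ Ω given by applying on each component the orthogonal projection π_Ω: U^p → Ω, then S(φ_Ω) = 𝒰. -/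
open Module LinearMap RealInnerProductSpace

/-
The complex structure makes `S(φ)` invariant under `𝒯`, and `𝒯` is self-adjoint for `⟨⟨,⟩⟩`,
so `𝒰 = S(φ) ∩ S(φ)^⊥` is `𝒯`-invariant as well; hence `π₂(𝒰) = π₁(𝒯𝒰) ⊆ Ω`. Since `𝒰` is
totally isotropic, `|u₁| = |u₂|` for `u ∈ 𝒰`, so `π₁` is injective on `𝒰` and `dim Ω = dim 𝒰`.
For `w ∈ S(φ)` pick `u ∈ 𝒰` with `u₁ = π_Ω w₁`; pairing `w - u ∈ S(φ)` with `𝒯v` for `v ∈ 𝒰`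
gives `⟨π_Ω w₂ - u₂, v₁⟩ = 0`, so `(π_Ω w₁, π_Ω w₂) = u ∈ 𝒰`. As `π_Ω × π_Ω` fixes
`𝒰 ⊆ S(φ)`, it maps `S(φ)` onto `𝒰`.
-/

theorem LinearMap.BilinForm.map_orthogonal_le {R M : Type*} [CommRing R] [AddCommGroup M]
    [Module R M] (B : LinearMap.BilinForm R M) {T : M →ₗ[R] M}
    (hBT : ∀ x y, B x (T y) = B (T x) y) {S : Submodule R M} (hS : S.map T ≤ S) :
    (B.orthogonal S).map T ≤ B.orthogonal S := by
  rintro _ ⟨v, hv, rfl⟩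
  refine (LinearMap.BilinForm.mem_orthogonal_iff).2 fun n hn => ?_
  rw [hBT]
  exact hv (T n) (hS (Submodule.mem_map_of_mem hn))

theorem LinearMap.BilinForm.map_inf_orthogonal_le {R M : Type*} [CommRing R] [AddCommGroup M]
    [Module R M] (B : LinearMap.BilinForm R M) {T : M →ₗ[R] M}
    (hBT : ∀ x y, B x (T y) = B (T x) y) {S : Submodule R M} (hS : S.map T ≤ S) :
    (S ⊓ B.orthogonal S).map T ≤ S ⊓ B.orthogonal S :=
  (Submodule.map_inf_le T).trans (inf_le_inf hS (B.map_orthogonal_le hBT hS))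

theorem Submodule.finrank_map_of_disjoint_ker {R M N : Type*} [DivisionRing R] [AddCommGroup M]
    [Module R M] [AddCommGroup N] [Module R N] (f : M →ₗ[R] N) (p : Submodule R M)
    (h : Disjoint p (LinearMap.ker f)) :
    finrank R (p.map f) = finrank R p := by
  have hinj : Function.Injective (f ∘ₗ p.subtype) := by
    rw [← LinearMap.ker_eq_bot, Submodule.eq_bot_iff]
    exact fun x hx => Subtype.ext (Submodule.disjoint_def.1 h x x.2 hx)
  rw [← LinearMap.finrank_range_of_inj hinj, LinearMap.range_comp, Submodule.range_subtype]

section SplitForm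

variable {U : Type*} [NormedAddCommGroup U] [InnerProductSpace ℝ U]
  {B : LinearMap.BilinForm ℝ (U × U)} {T : (U × U) →ₗ[ℝ] (U × U)}

theorem apply_swapNeg_eq_apply_swapNeg (hB : ∀ v w : U × U, B v w = ⟪v.1, w.1⟫ - ⟪v.2, w.2⟫)
    (hT : ∀ v : U × U, T v = (v.2, -v.1)) (x y : U × U) : B x (T y) = B (T x) y := by
  simp only [hB, hT, inner_neg_left, inner_neg_right, real_inner_comm]
  ring

theorem eq_zero_of_isotropic_of_fst_eq_zero
    (hB : ∀ v w : U × U, B v w = ⟪v.1, w.1⟫ - ⟪v.2, w.2⟫) {u : U × U} (hu : B u u = 0)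
    (h₁ : u.1 = 0) : u = 0 := by
  rw [hB, h₁, inner_zero_left, zero_sub, neg_eq_zero, inner_self_eq_zero] at hu
  exact Prod.ext h₁ hu

theorem finrank_map_fst_of_isotropic
    (hB : ∀ v w : U × U, B v w = ⟪v.1, w.1⟫ - ⟪v.2, w.2⟫) {𝒰 : Submodule ℝ (U × U)}
    (h𝒰 : ∀ u ∈ 𝒰, B u u = 0) :
    finrank ℝ (𝒰.map (LinearMap.fst ℝ U U)) = finrank ℝ 𝒰 :=
  Submodule.finrank_map_of_disjoint_ker _ _ <| Submodule.disjoint_def.2 fun u hu =>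
    eq_zero_of_isotropic_of_fst_eq_zero hB (h𝒰 u hu)

theorem snd_mem_map_fst (hT : ∀ v : U × U, T v = (v.2, -v.1)) {𝒰 : Submodule ℝ (U × U)}
    (h𝒰T : 𝒰.map T ≤ 𝒰) {u : U × U} (hu : u ∈ 𝒰) :
    u.2 ∈ 𝒰.map (LinearMap.fst ℝ U U) :=
  ⟨T u, h𝒰T (Submodule.mem_map_of_mem hu), by simp [hT]⟩

variable [FiniteDimensional ℝ U]

theorem starProjection_prod_mem
    (hB : ∀ v w : U × U, B v w = ⟪v.1, w.1⟫ - ⟪v.2, w.2⟫)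
    (hT : ∀ v : U × U, T v = (v.2, -v.1)) {S 𝒰 : Submodule ℝ (U × U)} (h𝒰S : 𝒰 ≤ S)
    (h𝒰orth : 𝒰 ≤ B.orthogonal S) (h𝒰T : 𝒰.map T ≤ 𝒰) {w : U × U} (hw : w ∈ S) :
    ((𝒰.map (LinearMap.fst ℝ U U)).starProjection w.1,
      (𝒰.map (LinearMap.fst ℝ U U)).starProjection w.2) ∈ 𝒰 := by
  set Ω := 𝒰.map (LinearMap.fst ℝ U U)
  obtain ⟨u, hu, hu₁⟩ : Ω.starProjection w.1 ∈ Ω := Ω.starProjection_apply_mem w.1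
  change u.1 = _ at hu₁
  suffices h₂ : Ω.starProjection w.2 = u.2 by
    have hu_eq : u = (Ω.starProjection w.1, Ω.starProjection w.2) := Prod.ext hu₁ h₂.symm
    exact hu_eq ▸ hu
  have hperp : ∀ a ∈ Ω, ⟪Ω.starProjection w.2 - u.2, a⟫ = 0 := by
    rintro _ ⟨v, hv, rfl⟩
    have hTv : T v ∈ 𝒰 := h𝒰T (Submodule.mem_map_of_mem hv)
    -- `w - u ∈ S(φ)` is orthogonal to `𝒯v ∈ 𝒰`; its first component is `w₁ - π_Ω w₁ ⊥ Ω ∋ v₂`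
    have horth : B (w - u) (T v) = 0 := h𝒰orth hTv (w - u) (S.sub_mem hw (h𝒰S hu))
    have h₁ : ⟪w.1 - Ω.starProjection w.1, v.2⟫ = 0 :=
      Ω.starProjection_inner_eq_zero _ _ (snd_mem_map_fst hT h𝒰T hv)
    have h₂ : ⟪w.2 - Ω.starProjection w.2, v.1⟫ = 0 :=
      Ω.starProjection_inner_eq_zero _ _ ⟨v, hv, rfl⟩
    simp only [hB, hT, Prod.fst_sub, Prod.snd_sub, inner_neg_right, sub_neg_eq_add, hu₁]
      at horth
    simp only [LinearMap.fst_apply, inner_sub_left] at h₁ h₂ horth ⊢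
    linarith
  have hmem : Ω.starProjection w.2 - u.2 ∈ Ω :=
    Ω.sub_mem (Ω.starProjection_apply_mem _) (snd_mem_map_fst hT h𝒰T hu)
  exact sub_eq_zero.1 (inner_self_eq_zero.1 (hperp _ hmem))

theorem map_prodMap_starProjection_eq
    (hB : ∀ v w : U × U, B v w = ⟪v.1, w.1⟫ - ⟪v.2, w.2⟫)
    (hT : ∀ v : U × U, T v = (v.2, -v.1)) {S 𝒰 : Submodule ℝ (U × U)} (h𝒰S : 𝒰 ≤ S)
    (h𝒰orth : 𝒰 ≤ B.orthogonal S) (h𝒰T : 𝒰.map T ≤ 𝒰) :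
    S.map (((𝒰.map (LinearMap.fst ℝ U U)).starProjection : U →ₗ[ℝ] U).prodMap
      (𝒰.map (LinearMap.fst ℝ U U)).starProjection) = 𝒰 := by
  refine le_antisymm ?_ fun u hu => ⟨u, h𝒰S hu, ?_⟩
  · rintro _ ⟨w, hw, rfl⟩
    exact starProjection_prod_mem hB hT h𝒰S h𝒰orth h𝒰T hw
  · exact Prod.ext (Submodule.starProjection_eq_self_iff.2 ⟨u, hu, rfl⟩)
      (Submodule.starProjection_eq_self_iff.2 (snd_mem_map_fst hT h𝒰T hu))

end SplitForm

theorem stmt_7_general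
    {V₁ V₂ U : Type*}
    [AddCommGroup V₁] [Module ℝ V₁]
    [AddCommGroup V₂] [Module ℝ V₂]
    [NormedAddCommGroup U] [InnerProductSpace ℝ U] [FiniteDimensional ℝ U]
    (J : V₂ →ₗ[ℝ] V₂)
    (B : LinearMap.BilinForm ℝ (U × U))
    (hB : ∀ v w : U × U, B v w = ⟪v.1, w.1⟫ - ⟪v.2, w.2⟫)
    (T : (U × U) →ₗ[ℝ] (U × U)) (hT : ∀ v : U × U, T v = (v.2, -v.1))
    (φ : V₁ →ₗ[ℝ] V₂ →ₗ[ℝ] (U × U))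
    (hφ : ∀ X Y, T (φ X Y) = φ X (J Y))
    (Sφ : Submodule ℝ (U × U))
    (hSφ : Sφ = Submodule.span ℝ {w | ∃ X Y, φ X Y = w})
    (𝒰 : Submodule ℝ (U × U)) (h𝒰 : 𝒰 = Sφ ⊓ B.orthogonal Sφ)
    (Ω : Submodule ℝ U) (hΩ : Ω = Submodule.map (LinearMap.fst ℝ U U) 𝒰) :
    finrank ℝ Ω = finrank ℝ 𝒰 ∧
      Submodule.span ℝ {w : U × U | ∃ X Y,
        w = ((Submodule.orthogonalProjectionOnto Ω ((φ X Y).1) : U),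
             (Submodule.orthogonalProjectionOnto Ω ((φ X Y).2) : U))} = 𝒰 := by
  have hST : Sφ.map T ≤ Sφ := by
    rw [hSφ, Submodule.map_span_le]
    rintro _ ⟨X, Y, rfl⟩
    exact Submodule.subset_span ⟨X, J Y, (hφ X Y).symm⟩
  have h𝒰T : 𝒰.map T ≤ 𝒰 :=
    h𝒰 ▸ B.map_inf_orthogonal_le (apply_swapNeg_eq_apply_swapNeg hB hT) hST
  have h𝒰S : 𝒰 ≤ Sφ := h𝒰 ▸ inf_le_left
  have h𝒰orth : 𝒰 ≤ B.orthogonal Sφ := h𝒰 ▸ inf_le_right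
  have hP : Sφ.map ((Ω.starProjection : U →ₗ[ℝ] U).prodMap Ω.starProjection) = 𝒰 := by
    subst hΩ
    exact map_prodMap_starProjection_eq hB hT h𝒰S h𝒰orth h𝒰T
  refine ⟨hΩ ▸ finrank_map_fst_of_isotropic hB fun u hu => h𝒰orth hu u (h𝒰S hu), ?_⟩
  rw [← hP, hSφ, Submodule.map_span]
  congr 1
  ext w
  constructor
  · rintro ⟨X, Y, rfl⟩
    exact ⟨_, ⟨X, Y, rfl⟩, rfl⟩
  · rintro ⟨_, ⟨X, Y, rfl⟩, rfl⟩
    exact ⟨X, Y, rfl⟩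

/-- Proposition (even), part (iv): if `Ω = π₁(𝒰)` then `dim Ω = dim 𝒰`, and the bilinear
map `φ_Ω`, obtained by applying the orthogonal projection `π_Ω` on each component of `φ`,
satisfies `S(φ_Ω) = 𝒰`. -/
theorem stmt_7
    {V₁ V₂ U : Type*}
    [AddCommGroup V₁] [Module ℝ V₁] [FiniteDimensional ℝ V₁]
    [AddCommGroup V₂] [Module ℝ V₂] [FiniteDimensional ℝ V₂]
    [NormedAddCommGroup U] [InnerProductSpace ℝ U] [FiniteDimensional ℝ U]
    (p : ℕ) (hU : finrank ℝ U = p)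
    (J : V₂ →ₗ[ℝ] V₂) (hJ : ∀ Y, J (J Y) = -Y)
    (B : LinearMap.BilinForm ℝ (U × U))
    (hB : ∀ v w : U × U, B v w = ⟪v.1, w.1⟫ - ⟪v.2, w.2⟫)
    (T : (U × U) →ₗ[ℝ] (U × U)) (hT : ∀ v : U × U, T v = (v.2, -v.1))
    (φ : V₁ →ₗ[ℝ] V₂ →ₗ[ℝ] (U × U))
    (hφ : ∀ X Y, T (φ X Y) = φ X (J Y))
    (Sφ : Submodule ℝ (U × U))
    (hSφ : Sφ = Submodule.span ℝ {w | ∃ X Y, φ X Y = w})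
    (𝒰 : Submodule ℝ (U × U)) (h𝒰 : 𝒰 = Sφ ⊓ B.orthogonal Sφ)
    (Ω : Submodule ℝ U) (hΩ : Ω = Submodule.map (LinearMap.fst ℝ U U) 𝒰) :
    finrank ℝ Ω = finrank ℝ 𝒰 ∧
      Submodule.span ℝ {w : U × U | ∃ X Y,
        w = ((Submodule.orthogonalProjectionOnto Ω ((φ X Y).1) : U),
             (Submodule.orthogonalProjectionOnto Ω ((φ X Y).2) : U))} = 𝒰 :=
  stmt_7_general J B hB T hT φ hφ Sφ hSφ 𝒰 h𝒰 Ω hΩ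
end

section
/- Let V₁, V₂ and W be finite-dimensional real vector spaces, let ⟨,⟩ be a symmetric bilinear form on W, and let φ: V₁ × V₂ → W be a bilinear map that is flat with respect to ⟨,⟩. If there is a dense subset A ⊆ V₁ such that ⟨φ(X,Y),φ(X,Z)⟩ = 0 for every X ∈ A and all Y,Z ∈ V₂, then ⟨φ(X,Y),φ(X',Z)⟩ = 0 for all X,X' ∈ V₁ and Y,Z ∈ V₂; that is, the subspace S(φ) is isotropic with respect to ⟨,⟩. -/
open Module LinearMap

lemma aux_cont {V₁ : Type*} [NormedAddCommGroup V₁] [NormedSpace ℝ V₁]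
    [FiniteDimensional ℝ V₁]
    (F : V₁ →ₗ[ℝ] V₁ →ₗ[ℝ] ℝ) : Continuous fun X => F X X := by
  let e := LinearMap.toContinuousLinearMap (𝕜 := ℝ) (E := V₁) (F' := ℝ)
  let G : V₁ →ₗ[ℝ] (V₁ →L[ℝ] ℝ) := e.toLinearMap ∘ₗ F
  have hG : Continuous G := G.continuous_of_finiteDimensional
  have : Continuous fun X => (G X) X := hG.clm_apply continuous_id
  simpa [G, e] using this

/-- If a flat bilinear map `φ` satisfies `⟨φ(X,Y), φ(X,Z)⟩ = 0` for all `X` in a dense subset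
of `V₁`, then `⟨φ(X,Y), φ(X',Z)⟩ = 0` for all arguments, i.e. `S(φ)` is isotropic. -/
theorem stmt_9
    {V₁ V₂ W : Type*}
    [NormedAddCommGroup V₁] [NormedSpace ℝ V₁] [FiniteDimensional ℝ V₁]
    [AddCommGroup V₂] [Module ℝ V₂] [FiniteDimensional ℝ V₂]
    [AddCommGroup W] [Module ℝ W] [FiniteDimensional ℝ W]
    (B : LinearMap.BilinForm ℝ W)
    (hBsymm : ∀ x y, B x y = B y x)
    (φ : V₁ →ₗ[ℝ] V₂ →ₗ[ℝ] W)
    (hflat : ∀ (X Z : V₁) (Y T : V₂), B (φ X Y) (φ Z T) - B (φ X T) (φ Z Y) = 0)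
    (A : Set V₁) (hA : Dense A)
    (hiso : ∀ X ∈ A, ∀ Y Z : V₂, B (φ X Y) (φ X Z) = 0) :
    ∀ (X X' : V₁) (Y Z : V₂), B (φ X Y) (φ X' Z) = 0 := by
  -- step 1: extend `hiso` to all of V₁ by density
  have hall : ∀ (X : V₁) (Y Z : V₂), B (φ X Y) (φ X Z) = 0 := by
    intro X Y Z
    -- the bilinear map (X, X') ↦ B (φ X Y) (φ X' Z)
    let F : V₁ →ₗ[ℝ] V₁ →ₗ[ℝ] ℝ :=
      LinearMap.mk₂ ℝ (fun X X' => B (φ X Y) (φ X' Z))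
        (by intro a b c; simp) (by intro a b c; simp)
        (by intro a b c; simp) (by intro a b c; simp)
    have hcont : Continuous fun X => F X X := aux_cont F
    have heq : (fun X => F X X) = (fun _ => (0 : ℝ)) := by
      apply Continuous.ext_on hA hcont continuous_const
      intro x hx
      simpa [F] using hiso x hx Y Z
    have := congrFun heq X
    simpa [F] using this
  intro X X' Y Z
  -- polarization: expand B (φ(X+X') Y) (φ(X+X') Z) = 0
  have hpol := hall (X + X') Y Z
  simp only [map_add, LinearMap.add_apply] at hpol
  rw [hall X Y Z, hall X' Y Z] at hpol
  -- hpol : B (φ X Y) (φ X' Z) + B (φ X' Y) (φ X Z) = 0 (up to rearranging)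
  have hfl := hflat X X' Y Z
  have hsym : B (φ X Z) (φ X' Y) = B (φ X' Y) (φ X Z) := hBsymm _ _
  have : B (φ X Y) (φ X' Z) = B (φ X' Y) (φ X Z) := by
    have := sub_eq_zero.mp hfl
    rw [this, hsym]
  linarith [hpol, this]
end

section
/- Let V be a real vector space, D ⊆ V a subspace, L a finite-dimensional real inner product space, and α: V × V → L a symmetric bilinear map such that L = span{α(X,Z) : X ∈ V, Z ∈ D}. Let K be a map assigning to each X ∈ V a skew-symmetric endomorphism K(X) of L, and assume the symmetry relation K(X)α(Y,Z) = K(Y)α(X,Z) holds whenever X,Y ∈ D, and also whenever Z ∈ D (with X,Y ∈ V arbitrary). Then K(Z) = 0 for every Z ∈ D. -/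
open Module LinearMap RealInnerProductSpace

/-- Lemma (charK), part (ii): if `L = span{α(X,Z) : X ∈ V, Z ∈ D}`, each `K(X)` is a
skew-symmetric endomorphism of `L`, and `K(X)α(Y,Z) = K(Y)α(X,Z)` whenever `X, Y ∈ D` or
`Z ∈ D`, then `K(Z) = 0` for every `Z ∈ D`. -/
theorem stmt_11
    {V L : Type*} [AddCommGroup V] [Module ℝ V]
    [NormedAddCommGroup L] [InnerProductSpace ℝ L] [FiniteDimensional ℝ L]
    (D : Submodule ℝ V)
    (α : V →ₗ[ℝ] V →ₗ[ℝ] L) (hαsymm : ∀ X Y, α X Y = α Y X)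
    (hspan : Submodule.span ℝ {w | ∃ X : V, ∃ Z ∈ D, α X Z = w} = ⊤)
    (K : V → L →ₗ[ℝ] L)
    (hskew : ∀ X : V, ∀ u v : L, ⟪K X u, v⟫ = -⟪u, K X v⟫)
    (hsymm : ∀ X Y Z : V, ((X ∈ D ∧ Y ∈ D) ∨ Z ∈ D) → K X (α Y Z) = K Y (α X Z)) :
    ∀ Z ∈ D, K Z = 0 := by
  have symXY : ∀ (T X Y U W : V), U ∈ D → W ∈ D →
      ⟪K T (α X U), α Y W⟫ = ⟪K T (α Y U), α X W⟫ := by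
    intro T X Y U W hU hW
    calc ⟪K T (α X U), α Y W⟫
        = ⟪K X (α T U), α Y W⟫ := by rw [hsymm T X U (Or.inr hU)]
      _ = -⟪α T U, K X (α Y W)⟫ := hskew X _ _
      _ = -⟪α T U, K Y (α X W)⟫ := by rw [hsymm X Y W (Or.inr hW)]
      _ = ⟪K Y (α T U), α X W⟫ := by rw [hskew Y (α T U) (α X W)]
      _ = ⟪K T (α Y U), α X W⟫ := by rw [hsymm Y T U (Or.inr hU)]
  have anti : ∀ (T X Y U W : V), U ∈ D → W ∈ D →
      ⟪K T (α X U), α Y W⟫ = -⟪K T (α X W), α Y U⟫ := by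
    intro T X Y U W hU hW
    calc ⟪K T (α X U), α Y W⟫
        = -⟪α X U, K T (α Y W)⟫ := hskew T _ _
      _ = -⟪K T (α Y W), α X U⟫ := by rw [real_inner_comm]
      _ = -⟪K T (α X W), α Y U⟫ := by rw [symXY T Y X W U hW hU]
  have swap : ∀ (X U Z : V), U ∈ D → Z ∈ D → K U (α X Z) = K Z (α X U) := by
    intro X U Z hU hZ
    calc K U (α X Z) = K X (α U Z) := hsymm U X Z (Or.inr hZ)
      _ = K X (α Z U) := by rw [hαsymm U Z]
      _ = K Z (α X U) := hsymm X Z U (Or.inr hU)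
  have key : ∀ (Z X U Y W : V), Z ∈ D → U ∈ D → W ∈ D →
      ⟪K Z (α X U), α Y W⟫ = 0 := by
    intro Z X U Y W hZ hU hW
    have e : ⟪K Z (α X U), α Y W⟫ = -⟪K Z (α X U), α Y W⟫ := by
      calc ⟪K Z (α X U), α Y W⟫
          = ⟪K U (α X Z), α Y W⟫ := by rw [swap X U Z hU hZ]
        _ = -⟪K U (α X W), α Y Z⟫ := anti U X Y Z W hZ hW
        _ = -⟪K W (α X U), α Y Z⟫ := by rw [swap X U W hU hW]
        _ = -(-⟪K W (α X Z), α Y U⟫) := by rw [anti W X Y Z U hZ hU, neg_neg]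
        _ = ⟪K W (α X Z), α Y U⟫ := neg_neg _
        _ = ⟪K Z (α X W), α Y U⟫ := by rw [swap X W Z hW hZ]
        _ = -⟪K Z (α X U), α Y W⟫ := anti Z X Y W U hW hU
    linarith [e]
  intro Z hZ
  have hz1 : ∀ X U, U ∈ D → K Z (α X U) = 0 := by
    intro X U hU
    have hall : ∀ w : L, ⟪K Z (α X U), w⟫ = 0 := by
      intro w
      have hw : w ∈ Submodule.span ℝ {w | ∃ X : V, ∃ Z ∈ D, α X Z = w} := by
        rw [hspan]; trivial
      induction hw using Submodule.span_induction with
      | mem w hw => obtain ⟨Y, W, hW, rfl⟩ := hw; exact key Z X U Y W hZ hU hW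
      | zero => simp
      | add x y _ _ hx hy => rw [inner_add_right, hx, hy, add_zero]
      | smul c x _ hx => rw [inner_smul_right, hx, mul_zero]
    exact inner_self_eq_zero.mp (hall _)
  ext v
  have hv : v ∈ Submodule.span ℝ {w | ∃ X : V, ∃ Z ∈ D, α X Z = w} := by
    rw [hspan]; trivial
  simp only [LinearMap.zero_apply]
  induction hv using Submodule.span_induction with
  | mem w hw => obtain ⟨X, U, hU, rfl⟩ := hw; exact hz1 X U hU
  | zero => simp
  | add x y _ _ hx hy => rw [map_add, hx, hy, add_zero]
  | smul c x _ hx => rw [map_smul, hx, smul_zero]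
end

section
/- Let V be a real vector space, D ⊆ V a subspace, L a finite-dimensional real inner product space, and α: V × V → L a symmetric bilinear map. Let K be a map assigning to each X ∈ V a skew-symmetric endomorphism K(X) of L, and assume that K(X)α(Y,Z) = K(Y)α(X,Z) for all X,Y ∈ V and all Z ∈ D. Then ⟨K(X)α(Y,Z), α(T,Z)⟩ = 0 for all X,Y,T ∈ V and all Z ∈ D. -/
open Module LinearMap RealInnerProductSpace

/-- Lemma (charK), part (iv): if each `K(X)` is a skew-symmetric endomorphism of `L` and
`K(X)α(Y,Z) = K(Y)α(X,Z)` for all `X, Y ∈ V` and `Z ∈ D`, then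
`⟨K(X)α(Y,Z), α(T,Z)⟩ = 0` for all `X, Y, T ∈ V` and `Z ∈ D`. -/
theorem stmt_12
    {V L : Type*} [AddCommGroup V] [Module ℝ V]
    [NormedAddCommGroup L] [InnerProductSpace ℝ L] [FiniteDimensional ℝ L]
    (D : Submodule ℝ V)
    (α : V →ₗ[ℝ] V →ₗ[ℝ] L) (hαsymm : ∀ X Y, α X Y = α Y X)
    (K : V → L →ₗ[ℝ] L)
    (hskew : ∀ X : V, ∀ u v : L, ⟪K X u, v⟫ = -⟪u, K X v⟫)
    (hsymm : ∀ X Y Z : V, Z ∈ D → K X (α Y Z) = K Y (α X Z)) :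
    ∀ X Y T Z : V, Z ∈ D → ⟪K X (α Y Z), α T Z⟫ = 0 := by
  intro X Y T Z hZ
  have h : ⟪K X (α Y Z), α T Z⟫ = -⟪K X (α Y Z), α T Z⟫ := by
    calc ⟪K X (α Y Z), α T Z⟫ = -⟪α Y Z, K X (α T Z)⟫ := hskew X _ _
      _ = -⟪α Y Z, K T (α X Z)⟫ := by rw [hsymm X T Z hZ]
      _ = ⟪K T (α Y Z), α X Z⟫ := (hskew T _ _).symm
      _ = ⟪K Y (α T Z), α X Z⟫ := by rw [hsymm T Y Z hZ]
      _ = -⟪α T Z, K Y (α X Z)⟫ := hskew Y _ _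
      _ = -⟪α T Z, K X (α Y Z)⟫ := by rw [hsymm Y X Z hZ]
      _ = -⟪K X (α Y Z), α T Z⟫ := by rw [real_inner_comm]
  linarith
end

section
/- Let W be a finite-dimensional real vector space endowed with a complex structure 𝒥, and let W₁,…,W_k be 𝒥-invariant subspaces of W such that W = W₁ + ⋯ + W_k and, for every i, W_i is not contained in Σ_{j≠i} W_j. Then dim W ≥ dim W₁ + 2(k−1). -/
open Module LinearMap

/-- A real vector space admitting a complex structure has even dimension. -/
lemma even_finrank_of_sq_neg_one {V : Type*} [AddCommGroup V] [Module ℝ V]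
    [FiniteDimensional ℝ V] (J : V →ₗ[ℝ] V) (hJ : ∀ x, J (J x) = -x) :
    Even (finrank ℝ V) := by
  have h1 : J ∘ₗ J = -LinearMap.id := by ext x; simp [hJ]
  have hdet : J.det * J.det = (-1 : ℝ) ^ finrank ℝ V := by
    rw [← LinearMap.det_comp, h1]
    have : (-LinearMap.id : V →ₗ[ℝ] V) = (-1 : ℝ) • LinearMap.id := by ext x; simp
    rw [this, LinearMap.det_smul]
    simp
  rcases Nat.even_or_odd (finrank ℝ V) with h | h
  · exact h
  · exfalso
    rw [h.neg_one_pow] at hdet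
    nlinarith [sq_nonneg J.det]

/-- An invariant subspace has even dimension. -/
lemma even_finrank_invariant {E : Type*} [AddCommGroup E] [Module ℝ E] [FiniteDimensional ℝ E]
    (𝒥 : E →ₗ[ℝ] E) (h𝒥 : ∀ x, 𝒥 (𝒥 x) = -x) (S : Submodule ℝ E)
    (hS : ∀ x ∈ S, 𝒥 x ∈ S) : Even (finrank ℝ S) := by
  refine even_finrank_of_sq_neg_one (𝒥.restrict hS) fun x => ?_
  ext
  simp [LinearMap.restrict_apply, h𝒥]

lemma dim_jump {E : Type*} [AddCommGroup E] [Module ℝ E] [FiniteDimensional ℝ E]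
    (𝒥 : E →ₗ[ℝ] E) (h𝒥 : ∀ x, 𝒥 (𝒥 x) = -x) (S T : Submodule ℝ E)
    (hS : ∀ x ∈ S, 𝒥 x ∈ S) (hT : ∀ x ∈ T, 𝒥 x ∈ T) (h : S < T) :
    finrank ℝ S + 2 ≤ finrank ℝ T := by
  have h1 := Submodule.finrank_lt_finrank_of_lt h
  obtain ⟨p, hp⟩ := even_finrank_invariant 𝒥 h𝒥 S hS
  obtain ⟨q, hq⟩ := even_finrank_invariant 𝒥 h𝒥 T hT
  omega

/-- If a finite-dimensional real vector space with a complex structure `𝒥` is the sum of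
`𝒥`-invariant subspaces `W₁, …, W_k`, none of which is contained in the sum of the others,
then `dim W ≥ dim W₁ + 2(k − 1)`. -/
theorem stmt_14
    {E : Type*} [AddCommGroup E] [Module ℝ E] [FiniteDimensional ℝ E]
    (𝒥 : E →ₗ[ℝ] E) (h𝒥 : ∀ x, 𝒥 (𝒥 x) = -x)
    (k : ℕ) (hk : 0 < k)
    (W : Fin k → Submodule ℝ E)
    (hinv : ∀ i, ∀ x ∈ W i, 𝒥 x ∈ W i)
    (hsum : (⨆ i, W i) = ⊤)
    (hnot : ∀ i, ¬ W i ≤ ⨆ j ∈ {j | j ≠ i}, W j) :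
    finrank ℝ (W ⟨0, hk⟩) + 2 * (k - 1) ≤ finrank ℝ E := by
  -- partial sups
  have hPinv : ∀ m : ℕ, ∀ x ∈ (⨆ j : Fin k, ⨆ _ : (j : ℕ) ≤ m, W j), 
      𝒥 x ∈ (⨆ j : Fin k, ⨆ _ : (j : ℕ) ≤ m, W j) := by
    intro m
    have : Submodule.map 𝒥 (⨆ j : Fin k, ⨆ _ : (j : ℕ) ≤ m, W j)
        ≤ ⨆ j : Fin k, ⨆ _ : (j : ℕ) ≤ m, W j := by
      simp only [Submodule.map_iSup]
      refine iSup_le fun j => iSup_le fun hj => ?_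
      refine le_trans ?_ (le_iSup₂ j hj)
      exact Submodule.map_le_iff_le_comap.mpr (fun x hx => hinv j x hx)
    intro x hx
    exact this ⟨x, hx, rfl⟩
  have hPmono : ∀ m : ℕ, (⨆ j : Fin k, ⨆ _ : (j : ℕ) ≤ m, W j)
      ≤ ⨆ j : Fin k, ⨆ _ : (j : ℕ) ≤ m + 1, W j := by
    intro m
    exact iSup_le fun j => iSup_le fun hj => le_iSup_of_le j (le_iSup_of_le (Nat.le_succ_of_le hj) le_rfl)
  have hP0 : (⨆ j : Fin k, ⨆ _ : (j : ℕ) ≤ 0, W j) = W ⟨0, hk⟩ := by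
    apply le_antisymm
    · refine iSup_le fun j => iSup_le fun hj => ?_
      have hj0 : (j : ℕ) = 0 := Nat.le_zero.mp hj
      have : j = ⟨0, hk⟩ := by apply Fin.ext; simpa using hj0
      rw [this]
    · exact le_iSup_of_le ⟨0, hk⟩ (le_iSup_of_le (Nat.le_refl 0) le_rfl)
  have hstep : ∀ m : ℕ, m + 1 < k → (⨆ j : Fin k, ⨆ _ : (j : ℕ) ≤ m, W j)
      < ⨆ j : Fin k, ⨆ _ : (j : ℕ) ≤ m + 1, W j := by
    intro m hm
    refine lt_of_le_of_ne (hPmono m) fun heq => ?_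
    apply hnot ⟨m + 1, hm⟩
    have h1 : W ⟨m + 1, hm⟩ ≤ ⨆ j : Fin k, ⨆ _ : (j : ℕ) ≤ m + 1, W j :=
      le_iSup_of_le (⟨m + 1, hm⟩ : Fin k) (le_iSup_of_le (Nat.le_refl (m + 1)) le_rfl)
    have h2 : (⨆ j : Fin k, ⨆ _ : (j : ℕ) ≤ m, W j)
        ≤ ⨆ j ∈ {j | j ≠ (⟨m + 1, hm⟩ : Fin k)}, W j := by
      refine iSup_le fun j => iSup_le fun hj => le_iSup_of_le j (le_iSup_of_le ?_ le_rfl)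
      show j ≠ ⟨m + 1, hm⟩
      intro hcontra
      rw [hcontra] at hj
      simp at hj
    exact h2.trans' (heq ▸ h1)
  have key : ∀ m : ℕ, m < k → finrank ℝ (W ⟨0, hk⟩) + 2 * m
      ≤ finrank ℝ ↥(⨆ j : Fin k, ⨆ _ : (j : ℕ) ≤ m, W j) := by
    intro m
    induction m with
    | zero => intro _; rw [hP0]; omega
    | succ n ih =>
      intro hm
      have h1 := ih (by omega)
      have h2 := dim_jump 𝒥 h𝒥 _ _ (hPinv n) (hPinv (n + 1)) (hstep n hm)
      omega
  have htop : (⨆ j : Fin k, ⨆ _ : (j : ℕ) ≤ k - 1, W j) = ⊤ := by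
    rw [← hsum]
    apply le_antisymm
    · exact iSup_le fun j => iSup_le fun _ => le_iSup W j
    · refine iSup_le fun j => le_iSup_of_le j (le_iSup_of_le ?_ le_rfl)
      have := j.isLt
      omega
  have := key (k - 1) (by omega)
  rw [htop] at this
  simpa [finrank_top] using this
end
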